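/- Let T be an inverse semigroup and U a right inverse T-set. Every idempotent φ of L(U) is self-adjoint: φ† = φ. -/
import Mathlib


/-- An inverse semigroup: a semigroup in which every element has a unique
generalized inverse `star s`. -/
class InverseSemigroup (S : Type*) extends Semigroup S where
  star : S → S
  mul_star_mul : ∀ s : S, s * star s * s = s
  star_mul_star : ∀ s : S, star s * s * star s = star s
  star_unique : ∀ s t : S, s * t * s = s → t * s * t = t → t = star s

postfix:max "⋆" => InverseSemigroup.star

/-- A right regular `T`-set over an inverse semigroup `T`. -/
structure RightRegularSet (T : Type*) [InverseSemigroup T] (U : Type*) where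
  act : U → T → U
  act_act : ∀ (u : U) (t t' : T), act (act u t) t' = act u (t * t')
  pair : U → U → T
  pair_act : ∀ (u u' : U) (t : T), pair u (act u' t) = pair u u' * t
  pair_star : ∀ u u' : U, (pair u u')⋆ = pair u' u
  act_pair_self : ∀ u : U, act u (pair u u) = u

/-- Condition (R-iv): the right regular `T`-set is a right inverse `T`-set. -/
def RightRegularSet.IsInverse {T : Type*} [InverseSemigroup T] {U : Type*}
    (M : RightRegularSet T U) : Prop :=
  ∀ u u' : U, M.act u (M.pair u' u) = u → M.act u' (M.pair u u') = u' → u = u'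

/-- The rank-one map `ω_{v,u} : U → V`, `ω_{v,u}(u') = v [u, u']`. -/
def omega {T : Type*} [InverseSemigroup T] {U V : Type*}
    (MU : RightRegularSet T U) (MV : RightRegularSet T V) (v : V) (u : U) :
    U → V :=
  fun w => MV.act v (MU.pair u w)

/-- `ψ` is an adjoint of `φ`: `[ψ(v), u] = [v, φ(u)]` for all `u, v`. -/
def IsAdjointPair {T : Type*} [InverseSemigroup T] {U : Type*}
    (M : RightRegularSet T U) (φ ψ : U → U) : Prop :=
  ∀ u v : U, M.pair (ψ v) u = M.pair v (φ u)


section Aux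

variable {T : Type*} [InverseSemigroup T] {U : Type*} (M : RightRegularSet T U)

/-- Star of the adjoint relation. -/
lemma adj_star {φ ψ : U → U} (h : IsAdjointPair M φ ψ) (u v : U) :
    M.pair u (ψ v) = M.pair (φ u) v := by
  have := congrArg (·⋆) (h u v)
  simpa [M.pair_star] using this

/-- The pairing separates points. -/
lemma pair_sep (hM : M.IsInverse) {a b : U}
    (h : ∀ v, M.pair v a = M.pair v b) : a = b := by
  have hba : M.pair b a = M.pair b b := h b
  have haa : M.pair a a = M.pair a b := h a
  have hab : M.pair a b = M.pair b b := by
    have := congrArg (·⋆) hba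
    simpa [M.pair_star] using this
  exact hM a b (by rw [hba, ← hab, ← haa]; exact M.act_pair_self a)
    (by rw [hab]; exact M.act_pair_self b)

/-- Adjointable maps are equivariant. -/
lemma adj_equiv (hM : M.IsInverse) {φ ψ : U → U} (h : IsAdjointPair M φ ψ)
    (u : U) (t : T) : φ (M.act u t) = M.act (φ u) t := by
  refine pair_sep M hM fun v => ?_
  rw [← h, M.pair_act, h, ← M.pair_act]

/-- If `φ` and its adjoint `ψ` are both idempotent, then `φ ∘ ψ = ψ`. -/
lemma comp_adj (hM : M.IsInverse) {φ ψ : U → U} (h : IsAdjointPair M φ ψ)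
    (hψ : ∀ x, ψ (ψ x) = ψ x) (u : U) : φ (ψ u) = ψ u := by
  set b := ψ u with hb
  set a := φ b with ha
  have hba : M.pair b a = M.pair b b := by
    rw [ha, ← h, hb, hψ]
  have hab : M.pair a b = M.pair b b := by
    have := congrArg (·⋆) hba
    simpa [M.pair_star] using this
  refine hM a b ?_ ?_
  · rw [hba, ha, ← adj_equiv M hM h, M.act_pair_self]
  · rw [hab, M.act_pair_self]

end Aux

theorem stmt17 {T : Type*} [InverseSemigroup T] {U : Type*}
    (M : RightRegularSet T U) (hM : M.IsInverse) (φ : U → U)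
    (hadj : ∃ ψ, IsAdjointPair M φ ψ) (hidem : φ ∘ φ = φ) :
    IsAdjointPair M φ φ := by
  obtain ⟨ψ, h⟩ := hadj
  have hφ : ∀ x, φ (φ x) = φ x := fun x => congrFun hidem x
  -- ψ is idempotent
  have hψ : ∀ x, ψ (ψ x) = ψ x := by
    intro x
    refine pair_sep M hM fun v => ?_
    rw [adj_star M h, adj_star M h, hφ, ← adj_star M h]
  -- the adjoint relation in the other order
  have h' : IsAdjointPair M ψ φ := fun u v => (adj_star M h v u).symm
  have hφψ : ∀ x, φ (ψ x) = ψ x := comp_adj M hM h hψ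
  have hψφ : ∀ x, ψ (φ x) = φ x := comp_adj M hM h' hφ
  intro u v
  calc M.pair (φ v) u = M.pair (ψ (φ v)) u := by rw [hψφ]
    _ = M.pair (φ v) (φ u) := h u (φ v)
    _ = M.pair v (ψ (φ u)) := (adj_star M h v (φ u)).symm
    _ = M.pair v (φ u) := by rw [hψφ]
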